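/- If P_{k+1} is positive semidefinite, Q is positive semidefinite, and R is positive definite, then the Riccati update P_k = Aᵀ P_{k+1} A + Q − Aᵀ P_{k+1} B (R + Bᵀ P_{k+1} B)^{-1} Bᵀ P_{k+1} A is positive semidefinite, where R + Bᵀ P_{k+1} B is invertible. -/

import Mathlib

open Matrix

theorem riccati_update_posSemidef (n m : ℕ)
    (A P Q : Matrix (Fin n) (Fin n) ℝ) (B : Matrix (Fin n) (Fin m) ℝ)
    (R : Matrix (Fin m) (Fin m) ℝ)
    (hP : P.PosSemidef) (hQ : Q.PosSemidef) (hR : R.PosDef) :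
    IsUnit (R + Bᵀ * P * B) ∧
      (Aᵀ * P * A + Q - Aᵀ * P * B * (R + Bᵀ * P * B)⁻¹ * Bᵀ * P * A).PosSemidef := by
  have hPT : Pᵀ = P := by
    have := hP.1
    rwa [Matrix.IsHermitian, conjTranspose_eq_transpose_of_trivial] at this
  have hBPB : (Bᵀ * P * B).PosSemidef := by
    simpa [conjTranspose_eq_transpose_of_trivial] using hP.conjTranspose_mul_mul_same B
  have hS : (R + Bᵀ * P * B).PosDef := hR.add_posSemidef hBPB
  refine ⟨hS.isUnit, ?_⟩
  -- The block matrix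
  have hX : ((fromCols A B)ᴴ * P * fromCols A B
      = fromBlocks (Aᵀ * P * A) (Aᵀ * P * B) (Bᵀ * P * A) (Bᵀ * P * B)) := by
    rw [conjTranspose_fromCols_eq_fromRows_conjTranspose, Matrix.mul_assoc,
      mul_fromCols, fromRows_mul_fromCols]
    simp [conjTranspose_eq_transpose_of_trivial, Matrix.mul_assoc]
  have hXP : (fromBlocks (Aᵀ * P * A) (Aᵀ * P * B) (Bᵀ * P * A) (Bᵀ * P * B)).PosSemidef := by
    rw [← hX]; exact hP.conjTranspose_mul_mul_same _
  have hQR : (fromBlocks Q 0 0 R).PosSemidef := by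
    rw [posSemidef_iff_dotProduct_mulVec]
    constructor
    · exact IsHermitian.fromBlocks hQ.1 (by simp) hR.1
    · intro x
      simp only [fromBlocks_mulVec, Matrix.zero_mulVec, add_zero, zero_add, dotProduct_block]
      exact add_nonneg ((posSemidef_iff_dotProduct_mulVec.mp hQ).2 _)
        ((posSemidef_iff_dotProduct_mulVec.mp hR.posSemidef).2 _)
  have hM : (fromBlocks (Aᵀ * P * A + Q) (Aᵀ * P * B) ((Aᵀ * P * B)ᴴ)
      (R + Bᵀ * P * B)).PosSemidef := by
    have h1 : (Aᵀ * P * B)ᴴ = Bᵀ * P * A := by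
      simp [conjTranspose_eq_transpose_of_trivial, transpose_mul, Matrix.mul_assoc,
        hPT]
    rw [h1]
    have : fromBlocks (Aᵀ * P * A + Q) (Aᵀ * P * B) (Bᵀ * P * A) (R + Bᵀ * P * B)
        = fromBlocks (Aᵀ * P * A) (Aᵀ * P * B) (Bᵀ * P * A) (Bᵀ * P * B)
          + fromBlocks Q 0 0 R := by
      rw [fromBlocks_add]; congr 1 <;> simp [add_comm]
    rw [this]
    exact hXP.add hQR
  haveI : Invertible (R + Bᵀ * P * B) := hS.isUnit.invertible
  have := (Matrix.PosDef.fromBlocks₂₂ (Aᵀ * P * A + Q) (Aᵀ * P * B) hS).mp hM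
  have h1 : (Aᵀ * P * B)ᴴ = Bᵀ * P * A := by
    simp [conjTranspose_eq_transpose_of_trivial, transpose_mul, Matrix.mul_assoc, hPT]
  rw [h1] at this
  have heq : Aᵀ * P * A + Q - Aᵀ * P * B * (R + Bᵀ * P * B)⁻¹ * Bᵀ * P * A
      = Aᵀ * P * A + Q - Aᵀ * P * B * (R + Bᵀ * P * B)⁻¹ * (Bᵀ * P * A) := by
    simp [Matrix.mul_assoc]
  rw [heq]
  exact this
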